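/- (Weakest-precondition characterization of QBUA) For every command C and resource functions P, Q: the QBUA validity ⊨B [P] C [Q] holds if and only if P ⪯ pre(C, Q), where pre(C, Q)(σ) = sup { p ∈ ℤ : ∃τ, q, q ≤ Q(τ) and C, σ, p ⇓ τ, q } (supremum taken in ℤ ∪ {−∞, +∞}, with sup ∅ = −∞). -/

import Mathlib

/-! Basic language: variables, states, semantic expressions, resource values. -/

abbrev Var := String
abbrev State := Var → ℤ
abbrev AExp := State → ℤ
abbrev BExp := State → Bool

/-- Resource values: ℤ ∪ {−∞, +∞}. -/
abbrev RVal := WithTop (WithBot ℤ)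
/-- Resource functions. -/
abbrev RF := State → RVal

/-- Embedding of an integer into `RVal`. -/
def iv (n : ℤ) : RVal := ((n : WithBot ℤ) : RVal)

/-- State update. -/
def upd (σ : State) (x : Var) (v : ℤ) : State := fun y => if y = x then v else σ y

/-- Commands of the IMP-like language. -/
inductive Cmd where
  | skip
  | assign (x : Var) (e : AExp)
  | assume' (b : BExp)
  | tick (e : AExp)
  | seq (c₁ c₂ : Cmd)
  | choice (c₁ c₂ : Cmd)
  | star (c : Cmd)
  | local' (x : Var) (c : Cmd)

/-- Resource-aware big-step semantics: `BigStep C σ p l τ q` is C, σ, p ⇓_l τ, q. -/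
inductive BigStep : Cmd → State → ℤ → ℤ → State → ℤ → Prop where
  | skip {σ p} : BigStep .skip σ p p σ p
  | assign {x e σ p} : BigStep (.assign x e) σ p p (upd σ x (e σ)) p
  | assume' {b : BExp} {σ p} : b σ = true → BigStep (.assume' b) σ p p σ p
  | tick {e σ p} : BigStep (.tick e) σ p (min p (p - e σ)) σ (p - e σ)
  | seq {c₁ c₂ σ p l₁ ρ r l₂ τ q} : BigStep c₁ σ p l₁ ρ r → BigStep c₂ ρ r l₂ τ q →
      BigStep (.seq c₁ c₂) σ p (min l₁ l₂) τ q
  | choiceL {c₁ c₂ σ p l τ q} : BigStep c₁ σ p l τ q → BigStep (.choice c₁ c₂) σ p l τ q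
  | choiceR {c₁ c₂ σ p l τ q} : BigStep c₂ σ p l τ q → BigStep (.choice c₁ c₂) σ p l τ q
  | starZero {c σ p} : BigStep (.star c) σ p p σ p
  | starStep {c σ p l τ q} : BigStep (.seq c (.star c)) σ p l τ q → BigStep (.star c) σ p l τ q
  | local' {x c σ p l τ q} (v : ℤ) : BigStep c σ p l τ q →
      BigStep (.local' x c) (upd σ x v) p l (upd τ x v) q

/-- C, σ, p ⇓ τ, q. -/
def BigStepP (c : Cmd) (σ : State) (p : ℤ) (τ : State) (q : ℤ) : Prop :=
  ∃ l, BigStep c σ p l τ q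

/-- C, σ, p ⇓≤0 τ, q. -/
def BigStepL (c : Cmd) (σ : State) (p : ℤ) (τ : State) (q : ℤ) : Prop :=
  ∃ l ≤ 0, BigStep c σ p l τ q

/-- `Indep f S`: the state function `f` does not depend on the variables in `S`
(i.e. fv(f) ∩ S = ∅). -/
def Indep {α : Type _} (f : State → α) (S : Set Var) : Prop :=
  ∀ σ σ' : State, (∀ y ∉ S, σ y = σ' y) → f σ = f σ'

/-- `Fresh y f`: the variable `y` is not free in the state function `f`. -/
def Fresh {α : Type _} (y : Var) (f : State → α) : Prop :=
  ∀ σ v, f (upd σ y v) = f σ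

/-- The set of variables possibly modified by a command. -/
def modVars : Cmd → Set Var
  | .skip => ∅
  | .assign x _ => {x}
  | .assume' _ => ∅
  | .tick _ => ∅
  | .seq c₁ c₂ => modVars c₁ ∪ modVars c₂
  | .choice c₁ c₂ => modVars c₁ ∪ modVars c₂
  | .star c => modVars c
  | .local' x c => modVars c \ {x}

/-- Substitution e[y/x] on semantic expressions. -/
def esubst {α : Type _} (e : State → α) (x y : Var) : State → α :=
  fun σ => e (upd σ x (σ y))

/-- `y` is not free in the command `C`. -/
def freshC (y : Var) : Cmd → Prop
  | .skip => True
  | .assign z e => y ≠ z ∧ Fresh y e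
  | .assume' b => Fresh y b
  | .tick e => Fresh y e
  | .seq c₁ c₂ => freshC y c₁ ∧ freshC y c₂
  | .choice c₁ c₂ => freshC y c₁ ∧ freshC y c₂
  | .star c => freshC y c
  | .local' z c => y = z ∨ freshC y c

/-- Substitution C[y/x]: rename every free occurrence of `x` in `C` to `y`. -/
def csubst : Cmd → Var → Var → Cmd
  | .skip, _, _ => .skip
  | .assign z e, x, y => .assign (if z = x then y else z) (esubst e x y)
  | .assume' b, x, y => .assume' (esubst b x y)
  | .tick e, x, y => .tick (esubst e x y)
  | .seq c₁ c₂, x, y => .seq (csubst c₁ x y) (csubst c₂ x y)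
  | .choice c₁ c₂, x, y => .choice (csubst c₁ x y) (csubst c₂ x y)
  | .star c, x, y => .star (csubst c x y)
  | .local' z c, x, y => if z = x then .local' z c else .local' z (csubst c x y)

/-- Bounded iteration: C⁰ = skip, C^(n+1) = C; Cⁿ. -/
def iter (c : Cmd) : ℕ → Cmd
  | 0 => .skip
  | n + 1 => .seq c (iter c n)

/-- Pointwise order on resource functions. -/
def rle (P Q : RF) : Prop := ∀ σ, P σ ≤ Q σ

/-- [B]: +∞ if B holds, −∞ otherwise. -/
def bnd (b : BExp) : RF := fun σ => if b σ then ⊤ else ⊥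

/-- `P` is finitely supported: it depends on only finitely many variables. -/
def FinSupp (P : RF) : Prop := ∃ S : Finset Var, Indep P ((↑S : Set Var)ᶜ)

/-- Semantic equivalence of commands. -/
def CEquiv (c c' : Cmd) : Prop := ∀ σ p l τ q, BigStep c σ p l τ q ↔ BigStep c' σ p l τ q

/-- QFUA validity ⊨F [P] C [Q]. -/
def FValid (P : RF) (c : Cmd) (Q : RF) : Prop :=
  ∀ τ (q : ℤ), Q τ ≤ iv q → ∃ σ, ∃ p : ℤ, P σ ≤ iv p ∧ BigStepP c σ p τ q

/-- QBUA validity ⊨B [P] C [Q]. -/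
def BValid (P : RF) (c : Cmd) (Q : RF) : Prop :=
  ∀ σ (p : ℤ), iv p ≤ P σ → ∃ τ, ∃ q : ℤ, iv q ≤ Q τ ∧ BigStepP c σ p τ q

/-- QBUA◇ validity ⊨B◇ [P] C [Q]. -/
def DValid (P : RF) (c : Cmd) (Q : RF) : Prop :=
  ∀ σ (p : ℤ), iv p ≤ P σ → ∃ τ, ∃ q : ℤ, iv q ≤ Q τ ∧ BigStepL c σ p τ q

/-- Quantitative weakest precondition (sup ∅ = −∞). -/
noncomputable def pre (c : Cmd) (Q : RF) : RF :=
  fun σ => sSup (iv '' {p : ℤ | ∃ τ, ∃ q : ℤ, iv q ≤ Q τ ∧ BigStepP c σ p τ q})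

/-!
Runs are invariant under translation of the resource: shifting the initial resource by `d`
shifts the final resource and the low-water mark by `d`. Hence the set of initial resources
from which some run reaches `Q` is downward closed in `ℤ`, so an integer lies below its supremum
in `ℤ ∪ {±∞}` exactly when it belongs to the set; and `P σ ≤ pre C Q σ` holds as soon as every
integer below `P σ` lies below `pre C Q σ`, which is QBUA validity at `σ`.
-/

@[simp]
lemma iv_le_iv {a b : ℤ} : iv a ≤ iv b ↔ a ≤ b := by
  simp [iv]

lemma RVal.le_iff_forall_iv_le {x y : RVal} : x ≤ y ↔ ∀ p : ℤ, iv p ≤ x → iv p ≤ y := by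
  refine ⟨fun hxy p hp => hp.trans hxy, fun h => ?_⟩
  induction x using WithTop.recTopCoe with
  | top =>
    induction y using WithTop.recTopCoe with
    | top => exact le_rfl
    | coe y =>
      induction y using WithBot.recBotCoe with
      | bot => exact absurd (h 0 le_top) (by simp [iv, -WithBot.coe_zero])
      | coe m =>
        have := iv_le_iv.mp (h (m + 1) le_top)
        omega
  | coe x =>
    induction x using WithBot.recBotCoe with
    | bot => exact bot_le
    | coe n => exact h n le_rfl

lemma iv_le_sSup_image_iff {p : ℤ} {A : Set ℤ} :
    iv p ≤ sSup (iv '' A) ↔ ∃ a ∈ A, p ≤ a := by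
  refine ⟨fun h => ?_, fun ⟨a, ha, hpa⟩ => (iv_le_iv.mpr hpa).trans (le_sSup ⟨a, ha, rfl⟩)⟩
  by_contra! hA
  have hbound : sSup (iv '' A) ≤ iv (p - 1) :=
    sSup_le fun _ ⟨a, ha, hx⟩ => hx ▸ iv_le_iv.mpr (by linarith [hA a ha])
  have := iv_le_iv.mp (h.trans hbound)
  omega

lemma BigStep.shift {c σ p l τ q} (h : BigStep c σ p l τ q) (d : ℤ) :
    BigStep c σ (p + d) (l + d) τ (q + d) := by
  induction h with
  | skip => exact .skip
  | assign => exact .assign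
  | assume' hb => exact .assume' hb
  | tick =>
    convert BigStep.tick using 1 <;> omega
  | seq _ _ ih₁ ih₂ =>
    convert BigStep.seq ih₁ ih₂ using 1
    omega
  | choiceL _ ih => exact .choiceL ih
  | choiceR _ ih => exact .choiceR ih
  | starZero => exact .starZero
  | starStep _ ih => exact .starStep ih
  | local' v _ ih => exact .local' v ih

lemma BigStepP.shift {c σ p τ q} (h : BigStepP c σ p τ q) (d : ℤ) :
    BigStepP c σ (p + d) τ (q + d) :=
  let ⟨l, hl⟩ := h
  ⟨l + d, hl.shift d⟩

lemma iv_le_pre_iff {c : Cmd} {Q : RF} {σ : State} {p : ℤ} :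
    iv p ≤ pre c Q σ ↔ ∃ τ, ∃ q : ℤ, iv q ≤ Q τ ∧ BigStepP c σ p τ q := by
  refine ⟨fun h => ?_, fun h => iv_le_sSup_image_iff.mpr ⟨p, h, le_rfl⟩⟩
  obtain ⟨p', ⟨τ, q, hq, hstep⟩, hpp'⟩ := iv_le_sSup_image_iff.mp h
  refine ⟨τ, q + (p - p'), (iv_le_iv.mpr (by omega)).trans hq, ?_⟩
  simpa using hstep.shift (p - p')

theorem bvalid_iff_le_pre (C : Cmd) (P Q : RF) :
    BValid P C Q ↔ rle P (pre C Q) := by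
  refine forall_congr' fun σ => ?_
  rw [RVal.le_iff_forall_iv_le]
  simp only [iv_le_pre_iff]
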